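/- arXiv:1402.6294 — 5 statements merged into one kernel-verified Lean document; each statement's English description precedes it below -/
import Mathlib

section
/- For fixed α ∈ (0, (q-1)/q], the function f_q(α) = α·log_q((q-1)/α) + (1-α)·log_q(1/(1-α)) is nonincreasing as a function of the real variable q ≥ 2, and satisfies f_q(α) ≥ qα/(q-1) for α ∈ [0,(q-1)/q]. -/
/-!
Let `g_q(α) = α log (q - 1) + h(α)`, with `h` the binary entropy in nats; the expression in the
theorem is `g_q(α) / log q`. Since `g_q` is concave with `g_q(0) = 0` and
`g_q((q - 1)/q) = log q`, the chord bound gives `g_q(α) ≥ (qα/(q - 1)) log q`: the second claim.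
For the first, `g_{q₂}(α) - g_{q₁}(α) = α (log (q₂ - 1) - log (q₁ - 1))`, which Bernoulli's
inequality bounds by `(q₁α/(q₁ - 1)) (log q₂ - log q₁)`, and the chord bound by
`(g_{q₁}(α)/log q₁) (log q₂ - log q₁)`; rearranging gives `g_{q₂}(α)/log q₂ ≤ g_{q₁}(α)/log q₁`.
-/

open Real Set

theorem ConcaveOn.smul_map_le_map_smul {E : Type*} [AddCommGroup E] [Module ℝ E] {s : Set E}
    {f : E → ℝ} (hf : ConcaveOn ℝ s f) (h0 : (0 : E) ∈ s) (hf0 : f 0 = 0) {x : E} (hx : x ∈ s)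
    {t : ℝ} (ht₀ : 0 ≤ t) (ht₁ : t ≤ 1) : t * f x ≤ f (t • x) := by
  simpa [hf0] using hf.2 h0 hx (sub_nonneg.2 ht₁) ht₀ (sub_add_cancel 1 t)

theorem log_sub_one_sub_log_sub_one_le {a b : ℝ} (ha : 1 < a) (hb : 1 < b) :
    log (b - 1) - log (a - 1) ≤ a / (a - 1) * (log b - log a) := by
  have ha₁ : 0 < a - 1 := sub_pos.2 ha
  have hb₁ : 0 < b - 1 := sub_pos.2 hb
  have bernoulli := one_add_mul_self_le_rpow_one_add (s := (b - a) / a)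
    (by rw [le_div_iff₀ (by linarith)]; linarith) (p := a / (a - 1))
    (by rw [le_div_iff₀ ha₁]; linarith)
  rw [show 1 + a / (a - 1) * ((b - a) / a) = (b - 1) / (a - 1) by field_simp; ring,
    show 1 + (b - a) / a = b / a by field_simp; ring] at bernoulli
  have hlog := log_le_log (by positivity) bernoulli
  rwa [log_rpow (by positivity), log_div hb₁.ne' ha₁.ne', log_div (by positivity) (by positivity)]
    at hlog

/-- Mathlib's `Real.qaryEntropy` (in nats) with a real alphabet size `q`. -/
noncomputable def qaryEntropyReal (q p : ℝ) : ℝ := p * log (q - 1) + binEntropy p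

@[simp]
theorem qaryEntropyReal_zero (q : ℝ) : qaryEntropyReal q 0 = 0 := by simp [qaryEntropyReal]

theorem qaryEntropyReal_sub_one_div {q : ℝ} (hq : 1 < q) :
    qaryEntropyReal q ((q - 1) / q) = log q := by
  have hq₀ : q ≠ 0 := by positivity
  have hq₁ : q - 1 ≠ 0 := (sub_pos.2 hq).ne'
  rw [qaryEntropyReal, binEntropy, show 1 - (q - 1) / q = q⁻¹ by field_simp; ring, inv_inv,
    inv_div, log_div hq₀ hq₁]
  field_simp
  ring

theorem mul_logb_add_mul_logb_eq {q : ℝ} (hq : q ≠ 1) (α : ℝ) :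
    α * logb q ((q - 1) / α) + (1 - α) * logb q (1 / (1 - α)) = qaryEntropyReal q α / log q := by
  rcases eq_or_ne α 0 with rfl | hα
  · simp
  rw [qaryEntropyReal, binEntropy, logb, logb, log_div (sub_ne_zero.2 hq) hα, one_div, log_inv,
    log_inv]
  ring

theorem concaveOn_qaryEntropyReal (q : ℝ) : ConcaveOn ℝ (Icc 0 1) (qaryEntropyReal q) := by
  have hlin : ConcaveOn ℝ (Icc 0 1) fun p : ℝ ↦ p * log (q - 1) :=
    ((LinearMap.lsmul ℝ ℝ).flip (log (q - 1))).concaveOn (convex_Icc 0 1)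
  exact hlin.add strictConcave_binEntropy.concaveOn

theorem mul_div_sub_one_le_qaryEntropyReal_div_log {q α : ℝ} (hq : 1 < q) (hα₀ : 0 ≤ α)
    (hα : α ≤ (q - 1) / q) : q * α / (q - 1) ≤ qaryEntropyReal q α / log q := by
  have hq₀ : 0 < q := by linarith
  have hq₁ : 0 < q - 1 := sub_pos.2 hq
  have hβ : (q - 1) / q ∈ Icc (0 : ℝ) 1 := ⟨by positivity, (div_le_one hq₀).2 (by linarith)⟩
  have ht₁ : q * α / (q - 1) ≤ 1 := by
    rw [div_le_one hq₁]; rwa [le_div_iff₀' hq₀] at hα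
  have hchord := (concaveOn_qaryEntropyReal q).smul_map_le_map_smul ⟨le_rfl, zero_le_one⟩
    (qaryEntropyReal_zero q) hβ (by positivity) ht₁
  rwa [qaryEntropyReal_sub_one_div hq, smul_eq_mul,
    show q * α / (q - 1) * ((q - 1) / q) = α by field_simp, ← le_div_iff₀ (log_pos hq)] at hchord

theorem qaryEntropyReal_div_log_antitone {q₁ q₂ α : ℝ} (hq₁ : 1 < q₁) (hq : q₁ ≤ q₂)
    (hα₀ : 0 ≤ α) (hα : α ≤ (q₁ - 1) / q₁) :
    qaryEntropyReal q₂ α / log q₂ ≤ qaryEntropyReal q₁ α / log q₁ := by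
  have hq₂ : 1 < q₂ := hq₁.trans_le hq
  have hu₁ : 0 < log q₁ := log_pos hq₁
  have hu : log q₁ ≤ log q₂ := log_le_log (by positivity) hq
  have hu₂ : 0 < log q₂ := hu₁.trans_le hu
  have hshift : α * (log (q₂ - 1) - log (q₁ - 1))
      ≤ qaryEntropyReal q₁ α / log q₁ * (log q₂ - log q₁) :=
    calc α * (log (q₂ - 1) - log (q₁ - 1))
        ≤ α * (q₁ / (q₁ - 1) * (log q₂ - log q₁)) := by
          gcongr; exact log_sub_one_sub_log_sub_one_le hq₁ hq₂
      _ = q₁ * α / (q₁ - 1) * (log q₂ - log q₁) := by ring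
      _ ≤ qaryEntropyReal q₁ α / log q₁ * (log q₂ - log q₁) :=
          mul_le_mul_of_nonneg_right (mul_div_sub_one_le_qaryEntropyReal_div_log hq₁ hα₀ hα)
            (sub_nonneg.2 hu)
  calc qaryEntropyReal q₂ α / log q₂
      = (qaryEntropyReal q₁ α + α * (log (q₂ - 1) - log (q₁ - 1))) / log q₂ := by
        simp only [qaryEntropyReal]; ring
    _ ≤ (qaryEntropyReal q₁ α + qaryEntropyReal q₁ α / log q₁ * (log q₂ - log q₁)) / log q₂ := by
        gcongr
    _ = qaryEntropyReal q₁ α / log q₁ := by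
        field_simp
        ring

theorem entropy_function_properties :
    (∀ q₁ q₂ α : ℝ, 2 ≤ q₁ → q₁ ≤ q₂ → 0 < α → α ≤ (q₁ - 1) / q₁ →
      α * Real.logb q₂ ((q₂ - 1) / α) + (1 - α) * Real.logb q₂ (1 / (1 - α))
        ≤ α * Real.logb q₁ ((q₁ - 1) / α) + (1 - α) * Real.logb q₁ (1 / (1 - α))) ∧
    (∀ q α : ℝ, 2 ≤ q → 0 ≤ α → α ≤ (q - 1) / q →
      α * Real.logb q ((q - 1) / α) + (1 - α) * Real.logb q (1 / (1 - α))
        ≥ q * α / (q - 1)) := by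
  refine ⟨fun q₁ q₂ α hq₁ hq hα₀ hα ↦ ?_, fun q α hq hα₀ hα ↦ ?_⟩
  · rw [mul_logb_add_mul_logb_eq (by linarith) α, mul_logb_add_mul_logb_eq (by linarith) α]
    exact qaryEntropyReal_div_log_antitone (by linarith) hq hα₀.le hα
  · rw [ge_iff_le, mul_logb_add_mul_logb_eq (by linarith) α]
    exact mul_div_sub_one_le_qaryEntropyReal_div_log (by linarith) hα₀ hα
end

section
/- Let ε ∈ (0,1), q ≥ 3, and let p be a prime with εn < p < 3n/5. Then any code C ⊆ [q]^n such that no two distinct words of C are at Hamming distance exactly p satisfies |C| ≤ q^{(1 - ε/125)n}. -/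
/-!
Frankl's polynomial method: if no distance in a code `D ⊆ [q]^m` is divisible by the prime `p`,
the functions `x ↦ 1 - d(c, x) ^ (p - 1)` over `ZMod p`, `c ∈ D`, are linearly independent by
Fermat's little theorem, and they lie in the span of the indicators of the words extending a
partial word with at most `p - 1` specified letters. Hence
`|D| ≤ ∑_{i < p} C(m, i) (q - 1) ^ i`, and weighting the nonzero letters by `3` and the letter `0`
by `2 (q - 1)` bounds this sum by `q ^ (124 m / 125)` as soon as `5 (p - 1) ≤ 3 m`.

If `C ⊆ [q]^n` avoids the distance `p`, fix a set of `m = min n (2p - 1)` coordinates. Two words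
of `C` agreeing off these coordinates are at distance in `(0, 2p) \ {p}`, never a multiple of `p`;
so `|C| ≤ q ^ (n - m) q ^ (124 m / 125) ≤ q ^ ((1 - ε / 125) n)`, because `m ≥ ε n`.
-/

open Finset Fintype

section CylinderSpan

variable {ι α : Type*} (K : Type*) [Fintype ι] [DecidableEq α] [Zero α] [CommRing K]

/-- A word `a` stands for the partial word formed by its nonzero letters; this is the indicator of
the words extending it, the analogue of a multilinear monomial of degree `hammingNorm a`. -/
def cylinderIndicator (a : ι → α) : (ι → α) → K :=
  fun x => if ∀ i, a i ≠ 0 → x i = a i then 1 else 0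

def cylinderSpan (k : ℕ) : Submodule K ((ι → α) → K) :=
  Submodule.span K (cylinderIndicator K '' {a | hammingNorm a ≤ k})

variable {K}

lemma cylinderIndicator_mem_cylinderSpan {a : ι → α} {k : ℕ} (ha : hammingNorm a ≤ k) :
    cylinderIndicator K a ∈ cylinderSpan K k :=
  Submodule.subset_span ⟨a, ha, rfl⟩

lemma one_mem_cylinderSpan (k : ℕ) : (1 : (ι → α) → K) ∈ cylinderSpan K k := by
  have h : cylinderIndicator K (0 : ι → α) = 1 := by ext x; simp [cylinderIndicator]
  exact h ▸ cylinderIndicator_mem_cylinderSpan (by simp)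

lemma cylinderIndicator_mul_mem (a b : ι → α) :
    cylinderIndicator K a * cylinderIndicator K b ∈
      cylinderSpan K (hammingNorm a + hammingNorm b) := by
  by_cases hab : ∀ i, a i ≠ 0 → b i ≠ 0 → a i = b i
  · set c : ι → α := fun i => if a i = 0 then b i else a i
    have hc : cylinderIndicator K a * cylinderIndicator K b = cylinderIndicator K c := by
      ext x
      simp only [Pi.mul_apply, cylinderIndicator, c]
      split_ifs <;> grind
    have hnorm : hammingNorm c ≤ hammingNorm a + hammingNorm b := by
      classical
      refine (card_le_card fun i => ?_).trans (card_union_le _ _)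
      simp only [c, mem_filter, mem_union, mem_univ, true_and]
      grind
    exact hc ▸ cylinderIndicator_mem_cylinderSpan hnorm
  · push Not at hab
    obtain ⟨i, hai, hbi, hne⟩ := hab
    have h0 : cylinderIndicator K a * cylinderIndicator K b = 0 := by
      ext x
      simp only [Pi.mul_apply, cylinderIndicator, Pi.zero_apply]
      split_ifs <;> grind
    exact h0 ▸ zero_mem _

lemma cylinderSpan_mul_le (j k : ℕ) :
    cylinderSpan K j * cylinderSpan K k ≤
      (cylinderSpan K (j + k) : Submodule K ((ι → α) → K)) := by
  rw [cylinderSpan, cylinderSpan, Submodule.span_mul_span, Submodule.span_le]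
  rintro _ ⟨_, ⟨a, ha, rfl⟩, _, ⟨b, hb, rfl⟩, rfl⟩
  exact Submodule.span_mono (Set.image_mono fun c (hc : hammingNorm c ≤ _) =>
    hc.trans (add_le_add ha hb)) (cylinderIndicator_mul_mem a b)

lemma pow_mem_cylinderSpan {f : (ι → α) → K} (hf : f ∈ cylinderSpan K 1) (k : ℕ) :
    f ^ k ∈ cylinderSpan K k := by
  induction k with
  | zero => simpa using one_mem_cylinderSpan 0
  | succ k ih => exact pow_succ f k ▸ cylinderSpan_mul_le k 1 (Submodule.mul_mem_mul ih hf)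

lemma coordIndicator_mem_cylinderSpan [Fintype α] [DecidableEq ι] (i : ι) (v : α) :
    (fun x : ι → α => if x i = v then (1 : K) else 0) ∈ cylinderSpan K 1 := by
  have h_ne_zero (v : α) (hv : v ≠ 0) :
      (fun x : ι → α => if x i = v then (1 : K) else 0) ∈ cylinderSpan K 1 := by
    have h : cylinderIndicator K (Pi.single i v) =
        fun x : ι → α => if x i = v then (1 : K) else 0 := by
      ext x
      simp only [cylinderIndicator]
      congr 1
      apply propext
      grind
    refine h ▸ cylinderIndicator_mem_cylinderSpan ?_
    refine (card_le_card fun j => ?_).trans (card_singleton i).le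
    by_cases hji : j = i <;> simp [hji]
  by_cases hv : v = 0
  · have h : (fun x : ι → α => if x i = 0 then (1 : K) else 0) =
        1 - ∑ w ∈ univ.erase 0, fun x : ι → α => if x i = w then (1 : K) else 0 := by
      ext x
      by_cases hx : x i = 0 <;> simp [hx, Finset.sum_ite_eq', eq_comm]
    rw [hv, h]
    exact sub_mem (one_mem_cylinderSpan 1) (sum_mem fun w hw => h_ne_zero w (ne_of_mem_erase hw))
  · exact h_ne_zero v hv

lemma natCast_hammingDist_mem_cylinderSpan [Fintype α] [DecidableEq ι] (c : ι → α) :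
    (fun x => (hammingDist c x : K)) ∈ cylinderSpan K 1 := by
  have h : (fun x => (hammingDist c x : K)) =
      ∑ i, (1 - fun x : ι → α => if x i = c i then (1 : K) else 0) := by
    ext x
    simp only [hammingDist, card_filter, Nat.cast_sum, Finset.sum_apply, Pi.sub_apply, Pi.one_apply]
    refine sum_congr rfl fun i _ => ?_
    by_cases h : c i = x i <;> simp [h, eq_comm]
  rw [h]
  exact sum_mem fun i _ =>
    sub_mem (one_mem_cylinderSpan 1) (coordIndicator_mem_cylinderSpan i (c i))

end CylinderSpan

-- `75` and `50` are the shares `3 / 5` and `2 / 5` of `125`, for weight `k = 3 m / 5`.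
lemma five_mul_sub_one_pow_le {q : ℕ} (hq : 3 ≤ q) :
    (5 * (q - 1)) ^ 125 ≤ 3 ^ 75 * (2 * (q - 1)) ^ 50 * q ^ 124 := by
  rcases lt_or_ge q 6 with hq6 | hq6
  · interval_cases q <;> norm_num
  · calc (5 * (q - 1)) ^ 125 = 5 ^ 125 * (q - 1) ^ 75 * (q - 1) ^ 50 := by ring
      _ ≤ 3 ^ 75 * 2 ^ 50 * 6 ^ 49 * q ^ 75 * (q - 1) ^ 50 := by gcongr <;> [norm_num; omega]
      _ ≤ 3 ^ 75 * 2 ^ 50 * q ^ 49 * q ^ 75 * (q - 1) ^ 50 := by gcongr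
      _ = 3 ^ 75 * (2 * (q - 1)) ^ 50 * q ^ 124 := by ring

section HammingBall

variable {ι α : Type*} [Fintype ι] [DecidableEq ι] [Fintype α] [DecidableEq α] [Zero α]

theorem card_le_card_hammingNorm_le_of_not_dvd_hammingDist {p : ℕ} (hp : p.Prime)
    (D : Finset (ι → α)) (hD : ∀ x ∈ D, ∀ y ∈ D, x ≠ y → ¬ p ∣ hammingDist x y) :
    #D ≤ #{a : ι → α | hammingNorm a ≤ p - 1} := by
  classical
  have := Fact.mk hp
  let f : D → (ι → α) → ZMod p := fun c x => 1 - (hammingDist c.1 x : ZMod p) ^ (p - 1)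
  have hf_mem (c : D) : f c ∈ cylinderSpan (ZMod p) (p - 1) :=
    sub_mem (one_mem_cylinderSpan _)
      (pow_mem_cylinderSpan (natCast_hammingDist_mem_cylinderSpan c.1) _)
  have hf_li : LinearIndependent (ZMod p) f := by
    refine LinearIndependent.of_pairwise_dual_eq_zero_one f (fun c => LinearMap.proj c.1) ?_ ?_
    · intro c c' hcc'
      have hne : (hammingDist c'.1 c.1 : ZMod p) ≠ 0 := by
        rw [Ne, ZMod.natCast_eq_zero_iff]
        exact hD c'.1 c'.2 c.1 c.2 (Subtype.coe_ne_coe.mpr hcc'.symm)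
      simp [f, ZMod.pow_card_sub_one_eq_one hne]
    · intro c
      simp [f, Nat.sub_eq_zero_iff_le, hp.one_lt.not_ge]
  let w : Finset ((ι → α) → ZMod p) :=
    ({a | hammingNorm a ≤ p - 1} : Finset (ι → α)).image (cylinderIndicator _)
  have h_span : Set.range f ⊆ Submodule.span (ZMod p) (w : Set ((ι → α) → ZMod p)) := by
    rintro _ ⟨c, rfl⟩
    simpa [w, cylinderSpan] using hf_mem c
  calc #D = Fintype.card D := (Fintype.card_coe D).symm
    _ ≤ _ := by simpa using linearIndependent_le_span' f hf_li _ h_span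
    _ ≤ _ := card_image_le

theorem card_le_card_hammingNorm_le_of_hammingDist_ne {p : ℕ} (hp : p.Prime) (hι : card ι < 2 * p)
    (D : Finset (ι → α)) (hD : ∀ x ∈ D, ∀ y ∈ D, x ≠ y → hammingDist x y ≠ p) :
    #D ≤ #{a : ι → α | hammingNorm a ≤ p - 1} := by
  refine card_le_card_hammingNorm_le_of_not_dvd_hammingDist hp D fun x hx y hy hxy hdvd => ?_
  have h_pos : 0 < hammingDist x y := hammingDist_pos.2 hxy
  have h_lt : hammingDist x y < 2 * p := hammingDist_le_card_fintype.trans_lt hι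
  have h_ne : hammingDist x y ≠ p := hD x hx y hy hxy
  have h_ge : p ≤ hammingDist x y := Nat.le_of_dvd h_pos hdvd
  have h_le : p ≤ hammingDist x y - p :=
    Nat.le_of_dvd (by omega) (Nat.dvd_sub hdvd dvd_rfl)
  omega

theorem card_hammingNorm_le_mul_le_pow {k : ℕ} (hk : k ≤ card ι) {r s : ℕ} (hsr : s ≤ r) :
    #{a : ι → α | hammingNorm a ≤ k} * (s ^ k * r ^ (card ι - k)) ≤
      (r + (card α - 1) * s) ^ card ι := by
  let w : α → ℕ := fun v => if v = 0 then r else s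
  have h_sum : ∑ v, w v = r + (card α - 1) * s := by
    simp [w, sum_ite, filter_ne', filter_eq', card_erase_of_mem]
  have h_prod (a : ι → α) :
      ∏ i, w (a i) = s ^ hammingNorm a * r ^ (card ι - hammingNorm a) := by
    have h_split := card_filter_add_card_filter_not (s := univ) fun i => a i = 0
    rw [card_univ] at h_split
    simp only [w, prod_ite, prod_const, hammingNorm]
    rw [mul_comm, ← h_split, Nat.add_sub_cancel_right]
  calc #{a : ι → α | hammingNorm a ≤ k} * (s ^ k * r ^ (card ι - k))
      = ∑ _a ∈ {a : ι → α | hammingNorm a ≤ k}, s ^ k * r ^ (card ι - k) := by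
        rw [sum_const, smul_eq_mul]
    _ ≤ ∑ a ∈ {a : ι → α | hammingNorm a ≤ k}, ∏ i, w (a i) := by
        refine sum_le_sum fun a ha => ?_
        have ha : hammingNorm a ≤ k := (mem_filter.mp ha).2
        rw [h_prod]
        calc s ^ k * r ^ (card ι - k)
            = s ^ hammingNorm a * s ^ (k - hammingNorm a) * r ^ (card ι - k) := by
              rw [← pow_add, Nat.add_sub_cancel' ha]
          _ ≤ s ^ hammingNorm a * r ^ (k - hammingNorm a) * r ^ (card ι - k) := by gcongr
          _ = s ^ hammingNorm a * r ^ (card ι - hammingNorm a) := by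
              rw [mul_assoc, ← pow_add]; congr 2; omega
    _ ≤ ∑ a : ι → α, ∏ i, w (a i) := sum_le_sum_of_subset (filter_subset _ _)
    _ = (r + (card α - 1) * s) ^ card ι := by
        rw [← Fintype.prod_sum, h_sum, prod_const, card_univ]

theorem card_hammingNorm_le_pow_le_pow (hq : 3 ≤ card α) {k : ℕ} (hk : 5 * k ≤ 3 * card ι) :
    #{a : ι → α | hammingNorm a ≤ k} ^ 125 ≤ card α ^ (124 * card ι) := by
  set q := card α
  set m := card ι
  set N := #{a : ι → α | hammingNorm a ≤ k}
  set A := 3 ^ k * (2 * (q - 1)) ^ (m - k)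
  have h_count : N * A ≤ (5 * (q - 1)) ^ m := by
    have h := card_hammingNorm_le_mul_le_pow (ι := ι) (α := α) (k := k) (by omega)
      (show 3 ≤ 2 * (q - 1) by omega)
    rwa [show 2 * (q - 1) + (q - 1) * 3 = 5 * (q - 1) by ring] at h
  have h_weight : 3 ^ (75 * m) * (2 * (q - 1)) ^ (50 * m) ≤ A ^ 125 := by
    calc 3 ^ (75 * m) * (2 * (q - 1)) ^ (50 * m)
        = 3 ^ (125 * k) * 3 ^ (75 * m - 125 * k) * (2 * (q - 1)) ^ (50 * m) := by
          rw [← pow_add]; congr 2; omega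
      _ ≤ 3 ^ (125 * k) * (2 * (q - 1)) ^ (75 * m - 125 * k) * (2 * (q - 1)) ^ (50 * m) := by
          gcongr; omega
      _ = (3 ^ k) ^ 125 * ((2 * (q - 1)) ^ (m - k)) ^ 125 := by
          rw [← pow_mul, ← pow_mul, mul_assoc, ← pow_add]; congr 2 <;> omega
      _ = A ^ 125 := (mul_pow _ _ _).symm
  have hA : 0 < A ^ 125 := pow_pos (mul_pos (pow_pos three_pos _) (pow_pos (by omega) _)) _
  refine le_of_mul_le_mul_left ?_ hA
  calc A ^ 125 * N ^ 125 = (N * A) ^ 125 := by ring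
    _ ≤ ((5 * (q - 1)) ^ 125) ^ m := by rw [← pow_mul, mul_comm 125, pow_mul]; gcongr
    _ ≤ (3 ^ 75 * (2 * (q - 1)) ^ 50 * q ^ 124) ^ m := by gcongr; exact five_mul_sub_one_pow_le hq
    _ = 3 ^ (75 * m) * (2 * (q - 1)) ^ (50 * m) * q ^ (124 * m) := by
        rw [mul_pow, mul_pow, ← pow_mul, ← pow_mul, ← pow_mul]
    _ ≤ A ^ 125 * q ^ (124 * m) := by gcongr

end HammingBall

lemma hammingDist_restrict_of_eqOn_compl {ι α : Type*} [Fintype ι] [DecidableEq α]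
    {S : Finset ι} {x y : ι → α} (h : ∀ i ∉ S, x i = y i) :
    hammingDist (S.restrict x) (S.restrict y) = hammingDist x y := by
  simp only [hammingDist, card_filter]
  exact (sum_coe_sort S fun i => if x i ≠ y i then 1 else 0).trans <|
    sum_subset (subset_univ S) fun i _ hi => by simp [h i hi]

theorem card_le_mul_pow_of_shortened_card_le {ι α : Type*} [Fintype ι] [DecidableEq ι]
    [Fintype α] [DecidableEq α] (S : Finset ι) (P : ℕ → Prop) {N : ℕ}
    (hN : ∀ D : Finset (S → α), (∀ x ∈ D, ∀ y ∈ D, x ≠ y → P (hammingDist x y)) →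
      #D ≤ N)
    (C : Finset (ι → α)) (hC : ∀ x ∈ C, ∀ y ∈ C, x ≠ y → P (hammingDist x y)) :
    #C ≤ N * card α ^ (card ι - #S) := by
  calc #C ≤ N * #(C.image (Sᶜ).restrict) := card_le_mul_card_image C N fun b _ => ?_
    _ ≤ N * card α ^ (card ι - #S) := by
        gcongr
        exact (card_le_univ _).trans_eq (by simp)
  set F := {x ∈ C | (Sᶜ).restrict x = b}
  have h_dist (x : ι → α) (hx : x ∈ F) (y : ι → α) (hy : y ∈ F) :
      hammingDist (S.restrict x) (S.restrict y) = hammingDist x y := by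
    refine hammingDist_restrict_of_eqOn_compl fun i hi => ?_
    exact congrFun ((mem_filter.1 hx).2.trans (mem_filter.1 hy).2.symm) ⟨i, mem_compl.2 hi⟩
  have h_inj : Set.InjOn S.restrict (F : Set (ι → α)) := fun x hx y hy hxy =>
    hammingDist_eq_zero.1 (by rw [← h_dist x hx y hy, hxy, hammingDist_self])
  rw [← card_image_of_injOn h_inj]
  refine hN _ ?_
  simp only [mem_image]
  rintro _ ⟨x, hx, rfl⟩ _ ⟨y, hy, rfl⟩ hne
  rw [h_dist x hx y hy]
  exact hC x (mem_filter.1 hx).1 y (mem_filter.1 hy).1 (ne_of_apply_ne _ hne)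

lemma natCast_le_rpow_of_pow_le {N q j k : ℕ} (hk : k ≠ 0) (h : N ^ k ≤ q ^ j) :
    (N : ℝ) ≤ (q : ℝ) ^ ((j : ℝ) / k) := by
  calc (N : ℝ) = ((N : ℝ) ^ k) ^ (k⁻¹ : ℝ) :=
        (Real.pow_rpow_inv_natCast (by positivity) hk).symm
    _ ≤ ((q : ℝ) ^ j) ^ (k⁻¹ : ℝ) := by gcongr; exact_mod_cast h
    _ = (q : ℝ) ^ ((j : ℝ) / k) := by
        rw [← Real.rpow_natCast, ← Real.rpow_mul (by positivity), div_eq_mul_inv]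

theorem forbidden_prime_distance_general (ε : ℝ) (hε1 : ε < 1)
    (q n p : ℕ) (hq : 3 ≤ q) (hp : p.Prime)
    (hpl : ε * n < p) (hpu : (p : ℝ) < 3 * n / 5)
    (C : Finset (Fin n → Fin q))
    (havoid : ∀ x ∈ C, ∀ y ∈ C, x ≠ y → hammingDist x y ≠ p) :
    (C.card : ℝ) ≤ (q : ℝ) ^ ((1 - ε / 125) * n) := by
  have : NeZero q := ⟨by omega⟩
  have hp2 : 2 ≤ p := hp.two_le
  have h5p : 5 * p < 3 * n := by exact_mod_cast (by linarith : (5 * p : ℝ) < 3 * n)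
  obtain ⟨S, -, hS⟩ :=
    exists_subset_card_eq ((min_le_left n (2 * p - 1)).trans_eq (Finset.card_fin n).symm)
  set N := #{a : S → Fin q | hammingNorm a ≤ p - 1}
  have hC : #C ≤ N * q ^ (n - #S) := by
    simpa using card_le_mul_pow_of_shortened_card_le S (· ≠ p)
      (fun D hD => card_le_card_hammingNorm_le_of_hammingDist_ne hp (by rw [card_coe, hS]; omega)
        D hD) C havoid
  have hN : N ^ 125 ≤ q ^ (124 * #S) := by
    simpa using card_hammingNorm_le_pow_le_pow (ι := S) (α := Fin q) (by simpa)
      (by rw [card_coe, hS]; omega)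
  have hεS : ε * n ≤ #S := by
    rw [hS, Nat.cast_min]
    refine le_min (mul_le_of_le_one_left n.cast_nonneg hε1.le) (hpl.le.trans ?_)
    exact_mod_cast (by omega : p ≤ 2 * p - 1)
  calc (#C : ℝ) ≤ N * q ^ (n - #S) := by exact_mod_cast hC
    _ ≤ q ^ ((124 * #S : ℕ) / 125 : ℝ) * q ^ (n - #S) := by
        gcongr; exact natCast_le_rpow_of_pow_le (by norm_num) hN
    _ = q ^ (n - #S / 125 : ℝ) := by
        rw [← Real.rpow_natCast, ← Real.rpow_add (by positivity),
          Nat.cast_sub (by omega : #S ≤ n)]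
        push_cast
        ring_nf
    _ ≤ q ^ ((1 - ε / 125) * n) :=
        Real.rpow_le_rpow_of_exponent_le (by norm_cast; omega) (by linarith)

theorem forbidden_prime_distance (ε : ℝ) (hε : 0 < ε) (hε1 : ε < 1)
    (q n p : ℕ) (hq : 3 ≤ q) (hp : p.Prime)
    (hpl : ε * n < p) (hpu : (p : ℝ) < 3 * n / 5)
    (C : Finset (Fin n → Fin q))
    (havoid : ∀ x ∈ C, ∀ y ∈ C, x ≠ y → hammingDist x y ≠ p) :
    (C.card : ℝ) ≤ (q : ℝ) ^ ((1 - ε / 125) * n) :=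
  forbidden_prime_distance_general ε hε1 q n p hq hp hpl hpu C havoid
end

section
/- Let ε ∈ (0,1/3) and q ≥ 3. Then every code C ⊆ [q]^n in which every pair of distinct words has Hamming distance at most (1 - ε)n satisfies |C| ≤ q^{(1 - ε/125)n}. -/
/-!
Let every word of `A ⊆ αⁿ⁺¹` agree with every word of `B ⊆ αⁿ⁺¹` in at least `t` places, and
slice both codes according to the first letter. Slices with different first letters still
agree in `t` places, slices with the same first letter in `t - 1`. Writing `q = |α|` and
`u = q - 1`, induction on `n` gives `|A| |B| ≤ (qⁿ / uᵗ)²`. In the inductive step at most one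
diagonal product `|A_a| |B_a|` exceeds the off-diagonal bound `g` (two such would give an
off-diagonal product above `g`), and a large one forces every product off its row and column
below `g² / |A_a| |B_a|`.

For the code `C` take `A = B = C` and `t = ⌈εn⌉`; then `|C| ≤ qⁿ / (q - 1)ᵗ ≤ q^((1 - ε/125) n)`
because `q ≤ (q - 1)²` for `q ≥ 3`.
-/

open Finset

theorem sum_mul_sum_le_of_mul_le {ι : Type*} [Fintype ι] [DecidableEq ι] {α β : ι → ℝ}
    (hα : ∀ a, 0 ≤ α a) (hβ : ∀ b, 0 ≤ β b) {g : ℝ} (hg : 0 ≤ g)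
    (hoff : ∀ a b, a ≠ b → α a * β b ≤ g)
    (hdiag : ∀ a, α a * β a ≤ ((Fintype.card ι : ℝ) - 1) ^ 2 * g) :
    (∑ a, α a) * (∑ b, β b) ≤ (Fintype.card ι : ℝ) ^ 2 * g := by
  by_cases hbig : ∃ a₀, g < α a₀ * β a₀
  · obtain ⟨a₀, hP⟩ := hbig
    set u : ℝ := (Fintype.card ι : ℝ) - 1
    set s := univ.erase a₀
    have hs : (#s : ℝ) = u := by
      rw [card_erase_of_mem (mem_univ a₀), card_univ,
        Nat.cast_pred (Fintype.card_pos_iff.mpr ⟨a₀⟩)]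
    have hrow : α a₀ * ∑ b ∈ s, β b ≤ u * g := by
      rw [mul_sum, ← hs, ← nsmul_eq_mul]
      exact sum_le_card_nsmul _ _ _ fun b hb => hoff _ _ (ne_of_mem_erase hb).symm
    have hcol : (∑ a ∈ s, α a) * β a₀ ≤ u * g := by
      rw [sum_mul, ← hs, ← nsmul_eq_mul]
      exact sum_le_card_nsmul _ _ _ fun a ha => hoff _ _ (ne_of_mem_erase ha)
    have hrest : (∑ a ∈ s, α a) * (∑ b ∈ s, β b) * (α a₀ * β a₀) ≤ u ^ 2 * g ^ 2 :=
      calc (∑ a ∈ s, α a) * (∑ b ∈ s, β b) * (α a₀ * β a₀)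
          = ∑ a ∈ s, ∑ b ∈ s, (α a₀ * β b) * (α a * β a₀) := by
            rw [sum_mul_sum, sum_mul]
            refine sum_congr rfl fun a _ => ?_
            rw [sum_mul]
            exact sum_congr rfl fun b _ => by ring
        _ ≤ ∑ a ∈ s, ∑ b ∈ s, g * g :=
            sum_le_sum fun a ha => sum_le_sum fun b hb =>
              mul_le_mul (hoff _ _ (ne_of_mem_erase hb).symm) (hoff _ _ (ne_of_mem_erase ha))
                (mul_nonneg (hα _) (hβ _)) hg
        _ = u ^ 2 * g ^ 2 := by simp only [sum_const, nsmul_eq_mul, hs]; ring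
    rw [← add_sum_erase _ _ (mem_univ a₀), ← add_sum_erase _ _ (mem_univ a₀),
      show (Fintype.card ι : ℝ) = u + 1 by ring]
    refine le_of_mul_le_mul_right ?_ (hg.trans_lt hP)
    -- after multiplying by `P = α a₀ * β a₀`, what remains is `(P - g) (P - u² g) ≤ 0`
    nlinarith [mul_nonneg (sub_nonneg.mpr hP.le) (sub_nonneg.mpr (hdiag a₀))]
  · push Not at hbig
    calc (∑ a, α a) * (∑ b, β b) = ∑ a, ∑ b, α a * β b := sum_mul_sum _ _ _ _
      _ ≤ ∑ a : ι, ∑ b : ι, g := sum_le_sum fun a _ => sum_le_sum fun b _ => by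
          rcases eq_or_ne a b with rfl | hab
          exacts [hbig a, hoff a b hab]
      _ = (Fintype.card ι : ℝ) ^ 2 * g := by
          simp only [sum_const, card_univ, nsmul_eq_mul]; ring

theorem hammingDist_cons {α : Type*} [DecidableEq α] {n : ℕ} (a b : α) (x y : Fin n → α) :
    hammingDist (Fin.cons a x : Fin (n + 1) → α) (Fin.cons b y) =
      hammingDist x y + if a = b then 0 else 1 := by
  simp only [hammingDist, card_filter, Fin.sum_univ_succ, Fin.cons_zero, Fin.cons_succ, ne_eq]
  split_ifs <;> simp_all [add_comm]

section Words

variable {α : Type*} [Fintype α]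

theorem card_mul_card_le_card_pow_sq {n : ℕ} (A B : Finset (Fin n → α)) :
    (#A : ℝ) * #B ≤ ((Fintype.card α : ℝ) ^ n) ^ 2 := by
  have hcard (A : Finset (Fin n → α)) : (#A : ℝ) ≤ Fintype.card α ^ n :=
    mod_cast (card_le_univ A).trans_eq (by simp)
  rw [sq]
  exact mul_le_mul (hcard A) (hcard B) (Nat.cast_nonneg _) (by positivity)

variable [DecidableEq α]

def consPreimage {n : ℕ} (A : Finset (Fin (n + 1) → α)) (a : α) : Finset (Fin n → α) :=
  {y | Fin.cons a y ∈ A}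

theorem card_eq_sum_card_consPreimage {n : ℕ} (A : Finset (Fin (n + 1) → α)) :
    #A = ∑ a, #(consPreimage A a) := by
  rw [card_eq_sum_card_fiberwise (f := fun x => x 0) (t := univ) fun _ _ => mem_univ _]
  refine sum_congr rfl fun a _ => card_nbij' Fin.tail (fun y => Fin.cons a y) ?_ ?_ ?_ ?_
  · intro x hx
    obtain ⟨hxA, rfl⟩ := mem_filter.mp hx
    simpa [consPreimage, Fin.cons_self_tail] using hxA
  · intro y hy
    simpa [consPreimage] using hy
  · intro x hx
    obtain ⟨-, rfl⟩ := mem_filter.mp hx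
    exact Fin.cons_self_tail x
  · intro y _
    exact Fin.tail_cons (α := fun _ => α) a y

variable [Nontrivial α]

theorem card_mul_card_le_of_hammingDist_add_le {n t : ℕ}
    {A B : Finset (Fin n → α)} (h : ∀ x ∈ A, ∀ y ∈ B, hammingDist x y + t ≤ n) :
    (#A : ℝ) * #B ≤ ((Fintype.card α : ℝ) ^ n / (Fintype.card α - 1) ^ t) ^ 2 := by
  set q := Fintype.card α
  have hu : (0 : ℝ) < q - 1 := sub_pos.mpr (mod_cast Fintype.one_lt_card)
  induction n generalizing t with
  | zero =>
    rcases t with _ | s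
    · simpa using card_mul_card_le_card_pow_sq A B
    rcases A.eq_empty_or_nonempty with rfl | ⟨x, hx⟩
    · rw [card_empty, Nat.cast_zero, zero_mul]; positivity
    rcases B.eq_empty_or_nonempty with rfl | ⟨y, hy⟩
    · rw [card_empty, Nat.cast_zero, mul_zero]; positivity
    exact absurd (h x hx y hy) (by omega)
  | succ m ih =>
    rcases t with _ | s
    · simpa using card_mul_card_le_card_pow_sq A B
    have hsame (a : α) :
        ∀ x ∈ consPreimage A a, ∀ y ∈ consPreimage B a, hammingDist x y + s ≤ m := by
      intro x hx y hy
      have := h _ (mem_filter.mp hx).2 _ (mem_filter.mp hy).2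
      rw [hammingDist_cons, if_pos rfl] at this
      omega
    have hdiff (a b : α) (hab : a ≠ b) :
        ∀ x ∈ consPreimage A a, ∀ y ∈ consPreimage B b, hammingDist x y + (s + 1) ≤ m := by
      intro x hx y hy
      have := h _ (mem_filter.mp hx).2 _ (mem_filter.mp hy).2
      rw [hammingDist_cons, if_neg hab] at this
      omega
    rw [card_eq_sum_card_consPreimage A, card_eq_sum_card_consPreimage B]
    push_cast
    calc (∑ a, (#(consPreimage A a) : ℝ)) * ∑ b, (#(consPreimage B b) : ℝ)
        ≤ q ^ 2 * ((q : ℝ) ^ m / (q - 1) ^ (s + 1)) ^ 2 := by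
          refine sum_mul_sum_le_of_mul_le (fun _ => Nat.cast_nonneg _)
            (fun _ => Nat.cast_nonneg _) (sq_nonneg _) (fun a b hab => ih (hdiff a b hab))
            fun a => ?_
          convert ih (hsame a) using 1
          field_simp
          ring
      _ = ((q : ℝ) ^ (m + 1) / (q - 1) ^ (s + 1)) ^ 2 := by ring

theorem card_le_of_hammingDist_add_le {n t : ℕ} {C : Finset (Fin n → α)}
    (h : ∀ x ∈ C, ∀ y ∈ C, hammingDist x y + t ≤ n) :
    (#C : ℝ) ≤ (Fintype.card α : ℝ) ^ n / (Fintype.card α - 1) ^ t := by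
  have hu : (0 : ℝ) < Fintype.card α - 1 := sub_pos.mpr (mod_cast Fintype.one_lt_card)
  refine (pow_le_pow_iff_left₀ (Nat.cast_nonneg _) (by positivity) two_ne_zero).mp ?_
  rw [sq]
  exact card_mul_card_le_of_hammingDist_add_le h

end Words

theorem small_diameter_code_general (ε : ℝ) (hε1 : ε < 1 / 3)
    (q n : ℕ) (hq : 3 ≤ q)
    (C : Finset (Fin n → Fin q))
    (hdiam : ∀ x ∈ C, ∀ y ∈ C, x ≠ y → (hammingDist x y : ℝ) ≤ (1 - ε) * n) :
    (C.card : ℝ) ≤ (q : ℝ) ^ ((1 - ε / 125) * n) := by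
  set t := ⌈ε * n⌉₊
  have hqR : (3 : ℝ) ≤ q := mod_cast hq
  have : Nontrivial (Fin q) := Fin.nontrivial_iff_two_le.mpr (by omega)
  have hC : ∀ x ∈ C, ∀ y ∈ C, hammingDist x y + t ≤ n := by
    intro x hx y hy
    have hle : hammingDist x y ≤ n := hammingDist_le_card_fintype.trans_eq (Fintype.card_fin n)
    suffices t ≤ n - hammingDist x y by omega
    refine Nat.ceil_le.mpr ?_
    rw [Nat.cast_sub hle]
    rcases eq_or_ne x y with rfl | hxy
    · rw [hammingDist_self, Nat.cast_zero, sub_zero]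
      nlinarith [n.cast_nonneg (α := ℝ)]
    · linarith [hdiam x hx y hy hxy]
  have hgain : (q : ℝ) ^ (ε / 125 * n) ≤ ((q : ℝ) - 1) ^ t :=
    calc (q : ℝ) ^ (ε / 125 * n) ≤ (q : ℝ) ^ ((1 / 2 : ℝ) * t) :=
          Real.rpow_le_rpow_of_exponent_le (by linarith)
            (by linarith [Nat.le_ceil (ε * n), t.cast_nonneg (α := ℝ)])
      _ = √(q : ℝ) ^ t := by rw [Real.rpow_mul_natCast (by positivity), ← Real.sqrt_eq_rpow]
      _ ≤ ((q : ℝ) - 1) ^ t :=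
          pow_le_pow_left₀ (Real.sqrt_nonneg _) (Real.sqrt_le_iff.mpr ⟨by linarith, by nlinarith⟩) t
  calc (#C : ℝ) ≤ (q : ℝ) ^ n / ((q : ℝ) - 1) ^ t := by
        simpa using card_le_of_hammingDist_add_le hC
    _ ≤ (q : ℝ) ^ ((1 - ε / 125) * n) := by
      rw [div_le_iff₀ (pow_pos (by linarith) t)]
      calc (q : ℝ) ^ n = (q : ℝ) ^ ((1 - ε / 125) * n) * (q : ℝ) ^ (ε / 125 * n) := by
            rw [← Real.rpow_add (by positivity), ← Real.rpow_natCast]; ring_nf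
        _ ≤ (q : ℝ) ^ ((1 - ε / 125) * n) * ((q : ℝ) - 1) ^ t := by gcongr

theorem small_diameter_code (ε : ℝ) (hε : 0 < ε) (hε1 : ε < 1 / 3)
    (q n : ℕ) (hq : 3 ≤ q)
    (C : Finset (Fin n → Fin q))
    (hdiam : ∀ x ∈ C, ∀ y ∈ C, x ≠ y → (hammingDist x y : ℝ) ≤ (1 - ε) * n) :
    (C.card : ℝ) ≤ (q : ℝ) ^ ((1 - ε / 125) * n) :=
  small_diameter_code_general ε hε1 q n hq C hdiam
end

section
/- For n even, let A₁ be the set of permutations of [n] mapping [n/2] to [n/2], and A₂ the set of permutations mapping [n/2] to [n/2 + 1, n]. Then |A₁| = |A₂| = ((n/2)!)², the Hamming distance between any π ∈ A₁ and ρ ∈ A₂ is exactly n, and ((n/2)!)² ≥ n!/3^n. -/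
/-!
A permutation carrying the lower half `S` of `[n]` into a set of the same size carries it onto
that set, and hence carries `Sᶜ` onto its complement. So `A₁` and `A₂` are both in bijection with
pairs of bijections between halves, giving `((n/2)!)²` each, and for `π ∈ A₁`, `ρ ∈ A₂` every `π i`
and `ρ i` lie in opposite halves. Finally `n! = C(n, n/2) ((n/2)!)² ≤ 2ⁿ ((n/2)!)²`.
-/

open Finset Nat

theorem Equiv.subtypeCongr_apply_of_pos {α : Type*} {p q : α → Prop} [DecidablePred p]
    [DecidablePred q] (e : {x // p x} ≃ {x // q x}) (f : {x // ¬p x} ≃ {x // ¬q x}) {a : α}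
    (h : p a) : e.subtypeCongr f a = e ⟨a, h⟩ := by
  simp [Equiv.subtypeCongr, sumCompl_symm_apply_of_pos h]

theorem Equiv.subtypeCongr_apply_of_neg {α : Type*} {p q : α → Prop} [DecidablePred p]
    [DecidablePred q] (e : {x // p x} ≃ {x // q x}) (f : {x // ¬p x} ≃ {x // ¬q x}) {a : α}
    (h : ¬p a) : e.subtypeCongr f a = f ⟨a, h⟩ := by
  simp [Equiv.subtypeCongr, sumCompl_symm_apply_of_neg h]

namespace Equiv.Perm

variable {α : Type*}

theorem mem_iff_apply_mem_of_mapsTo {π : Perm α} {S T : Finset α} (hcard : #T ≤ #S)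
    (h : ∀ i ∈ S, π i ∈ T) (i : α) : i ∈ S ↔ π i ∈ T := by
  have hmap : S.map π.toEmbedding = T :=
    eq_of_subset_of_card_le (fun j hj => by simpa using h _ (mem_map_equiv.mp hj)) (by simpa)
  rw [← hmap, mem_map_equiv, symm_apply_apply]

variable [DecidableEq α]

def subtypeMemIffEquiv (S T : Finset α) :
    {π : Perm α // ∀ i, i ∈ S ↔ π i ∈ T} ≃
      ({i // i ∈ S} ≃ {i // i ∈ T}) × ({i // i ∉ S} ≃ {i // i ∉ T}) where
  toFun π := (π.1.subtypeEquiv π.2, π.1.subtypeEquiv fun i => not_congr (π.2 i))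
  invFun ef := ⟨ef.1.subtypeCongr ef.2, fun i => by
    by_cases hi : i ∈ S
    · simp [hi, subtypeCongr_apply_of_pos _ _ hi]
    · simpa [hi, subtypeCongr_apply_of_neg _ _ hi] using (ef.2 ⟨i, hi⟩).2⟩
  left_inv π := by
    ext i
    by_cases hi : i ∈ S
    · simp [subtypeCongr_apply_of_pos _ _ hi]
    · simp [subtypeCongr_apply_of_neg _ _ hi]
  right_inv ef := by
    ext ⟨i, hi⟩
    · simp [subtypeCongr_apply_of_pos _ _ hi]
    · simp [subtypeCongr_apply_of_neg _ _ hi]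

theorem apply_ne_of_mapsTo_of_mapsTo_compl {π ρ : Perm α} {S : Finset α} [Fintype α]
    (hS : #Sᶜ ≤ #S) (hπ : ∀ i ∈ S, π i ∈ S) (hρ : ∀ i ∈ S, ρ i ∈ Sᶜ) (i : α) : π i ≠ ρ i := by
  intro heq
  have hπi := mem_iff_apply_mem_of_mapsTo le_rfl hπ i
  have hρi := mem_iff_apply_mem_of_mapsTo hS hρ i
  rw [heq] at hπi
  rw [mem_compl] at hρi
  tauto

theorem card_filter_forall_apply_mem [Fintype α] {S T : Finset α}
    [DecidablePred fun π : Perm α => ∀ i ∈ S, π i ∈ T] (h : #S = #T) :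
    #{π : Perm α | ∀ i ∈ S, π i ∈ T} = (#S)! * (#Sᶜ)! := by
  have hfilter : ({π | ∀ i ∈ S, π i ∈ T} : Finset (Perm α)) =
      ({π | ∀ i, i ∈ S ↔ π i ∈ T} : Finset (Perm α)) := by
    ext π
    simpa using ⟨fun hπ => mem_iff_apply_mem_of_mapsTo h.ge hπ, fun hπ i => (hπ i).mp⟩
  rw [hfilter, ← Fintype.card_subtype, Fintype.card_congr (subtypeMemIffEquiv S T),
    Fintype.card_prod, Fintype.card_equiv (Fintype.equivOfCardEq (by simpa using h)),
    Fintype.card_equiv (Fintype.equivOfCardEq (by simp [h]))]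
  simp [card_compl]

end Equiv.Perm

theorem Nat.factorial_two_mul_le_four_pow_mul_factorial_sq (m : ℕ) :
    (2 * m)! ≤ 4 ^ m * m ! ^ 2 := by
  rw [two_mul, ← add_choose_mul_factorial_mul_factorial, ← two_mul,
    ← centralBinom_eq_two_mul_choose, mul_assoc, ← sq]
  exact Nat.mul_le_mul_right _ (centralBinom_le_four_pow m)

theorem cross_version_fails_general (n : ℕ) (hn : Even n) :
    let A₁ : Finset (Equiv.Perm (Fin n)) :=
      Finset.univ.filter (fun π => ∀ i : Fin n, (i : ℕ) < n / 2 → ((π i : ℕ) < n / 2))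
    let A₂ : Finset (Equiv.Perm (Fin n)) :=
      Finset.univ.filter (fun π => ∀ i : Fin n, (i : ℕ) < n / 2 → (n / 2 ≤ (π i : ℕ)))
    A₁.card = ((n / 2).factorial) ^ 2 ∧
    A₂.card = ((n / 2).factorial) ^ 2 ∧
    (∀ π ∈ A₁, ∀ ρ ∈ A₂,
      (Finset.univ.filter (fun i => π i ≠ ρ i)).card = n) ∧
    ((n.factorial : ℝ) / 3 ^ n ≤ (((n / 2).factorial : ℝ)) ^ 2) := by
  intro A₁ A₂
  obtain ⟨m, rfl⟩ := hn
  have hm : (m + m) / 2 = m := by omega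
  set S : Finset (Fin (m + m)) := {i | (i : ℕ) < m}
  have hS : #S = m := by simp [S, Fin.card_filter_val_lt]
  have hSc : #Sᶜ = m := by simp [card_compl, hS]
  have hA₁ : A₁ = univ.filter fun π => ∀ i ∈ S, π i ∈ S := by simp [A₁, S, hm]
  have hA₂ : A₂ = univ.filter fun π => ∀ i ∈ S, π i ∈ Sᶜ := by simp [A₂, S, hm]
  rw [hm]
  refine ⟨?_, ?_, fun π hπ ρ hρ => ?_, ?_⟩
  · rw [hA₁, Equiv.Perm.card_filter_forall_apply_mem rfl, hS, hSc, sq]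
  · rw [hA₂, Equiv.Perm.card_filter_forall_apply_mem (hS.trans hSc.symm), hS, hSc, sq]
  · rw [hA₁, mem_filter] at hπ
    rw [hA₂, mem_filter] at hρ
    rw [filter_true_of_mem fun i _ =>
      Equiv.Perm.apply_ne_of_mapsTo_of_mapsTo_compl (hSc.trans hS.symm).le hπ.2 hρ.2 i,
      Finset.card_univ, Fintype.card_fin]
  · have h : (m + m)! ≤ 3 ^ (m + m) * m ! ^ 2 := calc
      (m + m)! ≤ 4 ^ m * m ! ^ 2 := two_mul m ▸ factorial_two_mul_le_four_pow_mul_factorial_sq m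
      _ ≤ 3 ^ (m + m) * m ! ^ 2 := by
        rw [← two_mul, pow_mul]
        gcongr
        norm_num
    rw [div_le_iff₀ (by positivity), mul_comm]
    exact_mod_cast h

theorem cross_version_fails (n : ℕ) (hn : Even n) (hpos : 0 < n) :
    let A₁ : Finset (Equiv.Perm (Fin n)) :=
      Finset.univ.filter (fun π => ∀ i : Fin n, (i : ℕ) < n / 2 → ((π i : ℕ) < n / 2))
    let A₂ : Finset (Equiv.Perm (Fin n)) :=
      Finset.univ.filter (fun π => ∀ i : Fin n, (i : ℕ) < n / 2 → (n / 2 ≤ (π i : ℕ)))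
    A₁.card = ((n / 2).factorial) ^ 2 ∧
    A₂.card = ((n / 2).factorial) ^ 2 ∧
    (∀ π ∈ A₁, ∀ ρ ∈ A₂,
      (Finset.univ.filter (fun i => π i ≠ ρ i)).card = n) ∧
    ((n.factorial : ℝ) / 3 ^ n ≤ (((n / 2).factorial : ℝ)) ^ 2) :=
  cross_version_fails_general n hn
end

section
/- Let p be a prime, D ⊆ Z_p \ {0} with |D| = l, and let C ⊆ [q]^n be a code such that the Hamming distance between any two distinct words of C is congruent mod p to some element of D. Then |C| ≤ Σ_{i=0}^{l} C(n,i)(q-1)^i. -/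
/-!
For `x ∈ C` the function `f_x y = ∏_{d ∈ D} (d_H(x, y) - d)` over `𝔽_p` vanishes on `C \ {x}`
but not at `x`, because `0 ∉ D`; so the `f_x` are linearly independent. Writing
`d_H(x, y) = n - ∑ⱼ [y j = x j]` shows that `f_x` is a combination of products of at most `l`
coordinate indicators `[y j = c]`, and `[y j = 0] = 1 - ∑_{c ≠ 0} [y j = c]` lets one take
every `c ≠ 0`. There are `∑_{i ≤ l} C(n, i) (q - 1)^i` such products.
-/

open Finset

namespace FranklModP

lemma linearIndependent_of_apply_diagonal {κ X R : Type*} [Ring R] [NoZeroDivisors R]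
    {v : κ → X → R} (x : κ → X) (hdiag : ∀ i, v i (x i) ≠ 0)
    (hoff : ∀ i j, i ≠ j → v i (x j) = 0) : LinearIndependent R v := by
  rw [linearIndependent_iff']
  intro s g hg i hi
  have hgi := congrFun hg (x i)
  rw [Finset.sum_apply, sum_eq_single i (fun j _ hji => by simp [hoff j i hji])
    (fun hi' => absurd hi hi')] at hgi
  exact (mul_eq_zero.mp hgi).resolve_right (hdiag i)

variable {ι α : Type*} [DecidableEq α]

section CommRing

variable {K : Type*} [CommRing K]

def coordIndicator (j : ι) (c : α) : (ι → α) → K := fun y => if y j = c then 1 else 0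

def cylinderIndicator (S : Finset ι) (a : ι → α) : (ι → α) → K :=
  ∏ i ∈ S, coordIndicator i (a i)

lemma coordIndicator_mul_coordIndicator (j : ι) (c c' : α) :
    (coordIndicator j c * coordIndicator j c' : (ι → α) → K)
      = if c = c' then coordIndicator j c else 0 := by
  funext y
  split_ifs with h
  · subst h
    by_cases hy : y j = c <;> simp [coordIndicator, hy]
  · by_cases hy : y j = c <;> simp [coordIndicator, hy, h]

lemma coordIndicator_eq_one_sub_sum [Fintype α] (j : ι) (o : α) :
    (coordIndicator j o : (ι → α) → K) = 1 - ∑ c ∈ univ.erase o, coordIndicator j c := by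
  have hsum : ∑ c, (coordIndicator j c : (ι → α) → K) = 1 := by
    funext y
    simp [coordIndicator, Finset.sum_apply]
  rw [← hsum, ← add_sum_erase _ _ (mem_univ o), add_sub_cancel_right]

lemma cylinderIndicator_congr {S : Finset ι} {a b : ι → α} (h : ∀ i ∈ S, a i = b i) :
    (cylinderIndicator S a : (ι → α) → K) = cylinderIndicator S b :=
  prod_congr rfl fun i hi => by rw [h i hi]

lemma cylinderIndicator_insert_update [DecidableEq ι] {j : ι} {S : Finset ι} (hj : j ∉ S)
    (a : ι → α) (c : α) :
    (cylinderIndicator (insert j S) (Function.update a j c) : (ι → α) → K)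
      = coordIndicator j c * cylinderIndicator S a := by
  rw [cylinderIndicator, prod_insert hj, Function.update_self]
  exact congrArg _ (cylinderIndicator_congr fun i hi =>
    Function.update_of_ne (ne_of_mem_of_not_mem hi hj) c a)

lemma coordIndicator_mul_cylinderIndicator_of_mem [DecidableEq ι] {j : ι} {S : Finset ι}
    (hj : j ∈ S) (a : ι → α) (c : α) :
    (coordIndicator j c * cylinderIndicator S a : (ι → α) → K)
      = if c = a j then cylinderIndicator S a else 0 := by
  rw [cylinderIndicator, ← mul_prod_erase _ _ hj, ← mul_assoc,
    coordIndicator_mul_coordIndicator]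
  split_ifs with h
  · rw [h]
  · rw [zero_mul]

variable (K) in
def lowDegree (o : α) (k : ℕ) : Submodule K ((ι → α) → K) :=
  Submodule.span K
    {f | ∃ S a, #S ≤ k ∧ (∀ i ∈ S, a i ≠ o) ∧ cylinderIndicator S a = f}

variable {o : α}

lemma cylinderIndicator_mem_lowDegree {k : ℕ} {S : Finset ι} {a : ι → α} (hS : #S ≤ k)
    (ha : ∀ i ∈ S, a i ≠ o) : cylinderIndicator S a ∈ lowDegree K o k :=
  Submodule.subset_span ⟨S, a, hS, ha, rfl⟩

lemma lowDegree_mono : Monotone (lowDegree K (ι := ι) o) := fun _ _ hkl =>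
  Submodule.span_mono fun _ ⟨S, a, hS, ha, hf⟩ => ⟨S, a, hS.trans hkl, ha, hf⟩

lemma coordIndicator_mul_mem_lowDegree_of_ne [DecidableEq ι] {k : ℕ} (j : ι) {c : α}
    (hc : c ≠ o) {f : (ι → α) → K} (hf : f ∈ lowDegree K o k) :
    coordIndicator j c * f ∈ lowDegree K o (k + 1) := by
  induction hf using Submodule.span_induction with
  | mem _ hmem =>
    obtain ⟨S, a, hS, ha, rfl⟩ := hmem
    by_cases hj : j ∈ S
    · rw [coordIndicator_mul_cylinderIndicator_of_mem hj]
      split_ifs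
      · exact cylinderIndicator_mem_lowDegree (by omega) ha
      · exact zero_mem _
    · rw [← cylinderIndicator_insert_update hj]
      refine cylinderIndicator_mem_lowDegree (by rw [card_insert_of_notMem hj]; omega)
        fun i hi => ?_
      rcases mem_insert.mp hi with rfl | hi
      · rwa [Function.update_self]
      · rw [Function.update_of_ne (ne_of_mem_of_not_mem hi hj)]
        exact ha i hi
  | zero => simp
  | add f g _ _ hf hg => rw [mul_add]; exact add_mem hf hg
  | smul r f _ hf => rw [mul_smul_comm]; exact Submodule.smul_mem _ r hf

lemma coordIndicator_mul_mem_lowDegree [DecidableEq ι] [Fintype α] {k : ℕ} (j : ι) (c : α)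
    {f : (ι → α) → K} (hf : f ∈ lowDegree K o k) :
    coordIndicator j c * f ∈ lowDegree K o (k + 1) := by
  rcases eq_or_ne c o with rfl | hc
  · rw [coordIndicator_eq_one_sub_sum j c, sub_mul, one_mul, sum_mul]
    exact sub_mem (lowDegree_mono k.le_succ hf) (Submodule.sum_mem _ fun c' hc' =>
      coordIndicator_mul_mem_lowDegree_of_ne j (ne_of_mem_erase hc') hf)
  · exact coordIndicator_mul_mem_lowDegree_of_ne j hc hf

lemma hammingDist_add_card_eq [Fintype ι] (x y : ι → α) :
    hammingDist x y + #{j | y j = x j} = Fintype.card ι := by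
  simpa [hammingDist, eq_comm, add_comm] using
    card_filter_add_card_filter_not (s := univ) (fun j => y j = x j)

lemma hammingDist_eq_card_sub_sum_coordIndicator [Fintype ι] (x y : ι → α) :
    (hammingDist x y : K) = Fintype.card ι - ∑ j, coordIndicator j (x j) y := by
  rw [eq_sub_iff_add_eq, ← hammingDist_add_card_eq x y]
  simp [coordIndicator]

lemma hammingDist_sub_mul_mem_lowDegree [Fintype ι] [DecidableEq ι] [Fintype α] {k : ℕ}
    (x : ι → α) (d : K) {f : (ι → α) → K} (hf : f ∈ lowDegree K o k) :
    (fun y => (hammingDist x y : K) - d) * f ∈ lowDegree K o (k + 1) := by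
  have hlin : (fun y => (hammingDist x y : K) - d) * f
      = ((Fintype.card ι : K) - d) • f - ∑ j, coordIndicator j (x j) * f := by
    funext y
    simp only [Pi.mul_apply, Pi.sub_apply, Pi.smul_apply, Finset.sum_apply, smul_eq_mul,
      hammingDist_eq_card_sub_sum_coordIndicator, ← sum_mul]
    ring
  rw [hlin]
  exact sub_mem (Submodule.smul_mem _ _ (lowDegree_mono k.le_succ hf))
    (Submodule.sum_mem _ fun j _ => coordIndicator_mul_mem_lowDegree j (x j) hf)

lemma prod_hammingDist_sub_mem_lowDegree [Fintype ι] [DecidableEq ι] [Fintype α] (x : ι → α)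
    (E : Finset K) : (∏ d ∈ E, fun y => (hammingDist x y : K) - d) ∈ lowDegree K o #E := by
  classical
  induction E using Finset.induction_on with
  | empty => exact cylinderIndicator_mem_lowDegree (S := ∅) (a := fun _ => o) le_rfl (by simp)
  | insert d E hd ih =>
    rw [prod_insert hd, card_insert_of_notMem hd]
    exact hammingDist_sub_mul_mem_lowDegree x d ih

end CommRing

/-- The first component, always `#S`, turns the count into a sum over `powersetCard`. -/
def normalForms [Fintype ι] [DecidableEq ι] [Fintype α] (o : α) (k : ℕ) :
    Finset (Σ _ : ℕ, Σ _ : Finset ι, ι → α) :=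
  (range (k + 1)).sigma fun i => (powersetCard i univ).sigma fun S =>
    Fintype.piFinset fun j => if j ∈ S then univ.erase o else {o}

lemma card_normalForms [Fintype ι] [DecidableEq ι] [Fintype α] (o : α) (k : ℕ) :
    #(normalForms (ι := ι) o k)
      = ∑ i ∈ range (k + 1), (Fintype.card ι).choose i * (Fintype.card α - 1) ^ i := by
  refine (card_sigma _ _).trans (sum_congr rfl fun i _ => ?_)
  have hfiber : ∀ S ∈ powersetCard i (univ : Finset ι),
      #(Fintype.piFinset fun j => if j ∈ S then univ.erase o else {o})
        = (Fintype.card α - 1) ^ i := by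
    intro S hS
    rw [Fintype.card_piFinset]
    simp only [apply_ite card, card_erase_of_mem (mem_univ o), card_univ, card_singleton]
    rw [prod_ite_mem, univ_inter, prod_const, (mem_powersetCard.mp hS).2]
  rw [card_sigma, sum_congr rfl hfiber, sum_const, card_powersetCard, card_univ, smul_eq_mul]

lemma lowDegree_le_span_normalForms {K : Type*} [CommRing K] [Fintype ι] [DecidableEq ι]
    [Fintype α] (o : α) (k : ℕ) :
    lowDegree K o k
      ≤ Submodule.span K
        (Set.range fun P : normalForms (ι := ι) o k => cylinderIndicator P.1.2.1 P.1.2.2) := by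
  refine Submodule.span_le.mpr ?_
  rintro _ ⟨S, a, hS, ha, rfl⟩
  refine Submodule.subset_span ⟨⟨⟨#S, S, fun j => if j ∈ S then a j else o⟩, ?_⟩,
    cylinderIndicator_congr fun i hi => if_pos hi⟩
  simp only [normalForms, mem_sigma, mem_range, mem_powersetCard, subset_univ, true_and,
    Fintype.mem_piFinset]
  refine ⟨by omega, fun j => ?_⟩
  split_ifs with hj
  · exact mem_erase.mpr ⟨ha j hj, mem_univ _⟩
  · exact mem_singleton_self o

lemma finrank_lowDegree_le (K : Type*) [Field K] [Fintype ι] [DecidableEq ι] [Fintype α]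
    (o : α) (k : ℕ) : Module.finrank K (lowDegree K (ι := ι) o k)
      ≤ ∑ i ∈ range (k + 1), (Fintype.card ι).choose i * (Fintype.card α - 1) ^ i :=
  calc Module.finrank K (lowDegree K o k)
      ≤ (Set.range fun P : normalForms (ι := ι) o k =>
          (cylinderIndicator P.1.2.1 P.1.2.2 : _ → K)).finrank K :=
        Submodule.finrank_mono (lowDegree_le_span_normalForms o k)
    _ ≤ #(normalForms (ι := ι) o k) := (finrank_range_le_card _).trans (Fintype.card_coe _).le
    _ = _ := card_normalForms o k

end FranklModP

open FranklModP

/-- Frankl's theorem on mod-p codes. -/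
theorem frankl_mod_p_code (p q n l : ℕ) (hp : p.Prime) (hq : 2 ≤ q)
    (D : Finset (ZMod p)) (hD0 : (0 : ZMod p) ∉ D) (hDl : D.card = l)
    (C : Finset (Fin n → Fin q))
    (hC : ∀ x ∈ C, ∀ y ∈ C, x ≠ y → ((hammingDist x y : ZMod p)) ∈ D) :
    C.card ≤ ∑ i ∈ Finset.range (l + 1), n.choose i * (q - 1) ^ i := by
  have : Fact p.Prime := ⟨hp⟩
  have : NeZero q := ⟨by omega⟩
  let F : C → (Fin n → Fin q) → ZMod p :=
    fun x => ∏ d ∈ D, fun y => (hammingDist x.1 y : ZMod p) - d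
  have hF : LinearIndependent (ZMod p) F := by
    refine linearIndependent_of_apply_diagonal (fun x => x.1) (fun x => ?_)
      (fun x y hxy => ?_)
    · simp only [F, Finset.prod_apply, hammingDist_self, Nat.cast_zero, zero_sub]
      exact Finset.prod_ne_zero_iff.mpr fun d hd => neg_ne_zero.mpr fun h => hD0 (h ▸ hd)
    · simp only [F, Finset.prod_apply]
      exact Finset.prod_eq_zero (hC x.1 x.2 y.1 y.2 (Subtype.coe_injective.ne hxy)) (sub_self _)
  have hspan : Submodule.span (ZMod p) (Set.range F) ≤ lowDegree (ZMod p) 0 l :=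
    Submodule.span_le.mpr <| Set.range_subset_iff.mpr fun x =>
      hDl ▸ prod_hammingDist_sub_mem_lowDegree x.1 D
  calc C.card = Module.finrank (ZMod p) (Submodule.span (ZMod p) (Set.range F)) := by
        rw [finrank_span_eq_card hF, Fintype.card_coe]
    _ ≤ Module.finrank (ZMod p) (lowDegree (ZMod p) (ι := Fin n) (0 : Fin q) l) :=
        Submodule.finrank_mono hspan
    _ ≤ _ := by simpa using finrank_lowDegree_le (ZMod p) (ι := Fin n) (0 : Fin q) l
end
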